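/- Let δ > 0, γ ≥ 0, γ' > 1/δ, and μ > 0 with δ(γ + γ') > 2 and (1+μ)(γ + γ') < 1. For n > 1 set I_μ(n) = ∫_{n^{−1−μ}}^1 ∫_{n^{−1−μ}}^1 min(1, (min(s,t))^{−γδ} (max(s,t))^{−γ'δ} n^{−δ}) ds dt. Then lim_{n→∞} (−log I_μ(n) / log n) = δ − (1+μ)(δ(γ + γ') − 2). -/

import Mathlib

/-!
Put `α = γδ`, `β = γ'δ`, `a = n^(-1-μ)`, `ε = n^(-δ)`; the double integral is of exact order
`ε a^(2-α-β) = n^(-(δ - (1+μ)(α+β-2)))`. For the upper bound drop the truncation at `1` and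
dominate the kernel by `s^(-p) t^(-q) + s^(-q) t^(-p)` with `p, q > 1` and `p + q = α + β`, which
is possible because `β > 1` and `α + β > 2`; each term integrates over `[a,1]²` to
`O(a^(2-p-q))`. For the lower bound, on the corner square `[a,2a]²` the kernel is at least
`(2a)^(-α-β)`, and `(1+μ)(α+β) ≤ δ` keeps the truncation inactive there.
-/

open Filter MeasureTheory Set Function Topology

section IteratedIntegral

variable {X : Type*} [MeasurableSpace X] {μ : Measure X} [SFinite μ] {f : X → X → ℝ}
  {S T : Set X} {C : ℝ}

theorem integrableOn_setIntegral_of_abs_le (hS : MeasurableSet S) (hSμ : μ S < ⊤)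
    (hf : Measurable (uncurry f)) (hfC : ∀ s ∈ S, ∀ t ∈ S, |f s t| ≤ C) :
    IntegrableOn (fun s => ∫ t in S, f s t ∂μ) S μ := by
  refine IntegrableOn.of_bound hSμ
    (hf.stronglyMeasurable.integral_prod_right' (ν := μ.restrict S)).aestronglyMeasurable
    (C * μ.real S) ?_
  filter_upwards [ae_restrict_mem hS] with s hs
  exact norm_setIntegral_le_of_norm_le_const hSμ fun t ht => hfC s hs t ht

theorem measureReal_sq_mul_le_setIntegral_setIntegral {m : ℝ} (hS : MeasurableSet S)
    (hSμ : μ S < ⊤) (hT : MeasurableSet T) (hTS : T ⊆ S) (hf : Measurable (uncurry f))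
    (hf0 : ∀ s ∈ S, ∀ t ∈ S, 0 ≤ f s t) (hfC : ∀ s ∈ S, ∀ t ∈ S, f s t ≤ C)
    (hm : ∀ s ∈ T, ∀ t ∈ T, m ≤ f s t) :
    μ.real T ^ 2 * m ≤ ∫ s in S, ∫ t in S, f s t ∂μ ∂μ := by
  have hTμ : μ T < ⊤ := (measure_mono hTS).trans_lt hSμ
  have habs : ∀ s ∈ S, ∀ t ∈ S, |f s t| ≤ C := fun s hs t ht => by
    rw [abs_of_nonneg (hf0 s hs t ht)]; exact hfC s hs t ht
  have hslice : ∀ s ∈ S, IntegrableOn (f s) S μ := fun s hs =>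
    IntegrableOn.of_bound hSμ (hf.comp measurable_prodMk_left).aestronglyMeasurable C
      (ae_restrict_of_forall_mem hS (habs s hs))
  have hinner : ∀ s ∈ T, μ.real T * m ≤ ∫ t in S, f s t ∂μ := fun s hs => calc
    μ.real T * m = ∫ _ in T, m ∂μ := by rw [setIntegral_const, smul_eq_mul]
    _ ≤ ∫ t in T, f s t ∂μ :=
      setIntegral_mono_on (integrableOn_const hTμ.ne)
        ((hslice s (hTS hs)).mono_set hTS) hT (hm s hs)
    _ ≤ ∫ t in S, f s t ∂μ :=
      setIntegral_mono_set (hslice s (hTS hs))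
        (ae_restrict_of_forall_mem hS (hf0 s (hTS hs))) hTS.eventuallyLE
  have hg := integrableOn_setIntegral_of_abs_le hS hSμ hf habs
  calc μ.real T ^ 2 * m = ∫ _ in T, μ.real T * m ∂μ := by
        rw [setIntegral_const, smul_eq_mul]; ring
    _ ≤ ∫ s in T, ∫ t in S, f s t ∂μ ∂μ :=
      setIntegral_mono_on (integrableOn_const hTμ.ne) (hg.mono_set hTS) hT hinner
    _ ≤ ∫ s in S, ∫ t in S, f s t ∂μ ∂μ :=
      setIntegral_mono_set hg (ae_restrict_of_forall_mem hS fun s hs =>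
        setIntegral_nonneg hS (hf0 s hs)) hTS.eventuallyLE

end IteratedIntegral

theorem integrableOn_Icc_rpow {a b r : ℝ} (ha : 0 < a) :
    IntegrableOn (fun t : ℝ => t ^ r) (Icc a b) :=
  (continuousOn_id.rpow_const fun _ ht => Or.inl (ha.trans_le ht.1).ne').integrableOn_Icc

theorem setIntegral_Icc_rpow_neg_le {a p : ℝ} (ha : 0 < a) (ha1 : a ≤ 1) (hp : 1 < p) :
    ∫ t in Icc a 1, t ^ (-p) ≤ a ^ (1 - p) / (p - 1) := by
  have h0 : (0 : ℝ) ∉ uIcc a 1 := by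
    rw [uIcc_of_le ha1]; exact fun h => h.1.not_gt ha
  rw [integral_Icc_eq_integral_Ioc, ← intervalIntegral.integral_of_le ha1,
    integral_rpow (Or.inr ⟨by linarith, h0⟩), Real.one_rpow, show -p + 1 = 1 - p by ring,
    show (1 - a ^ (1 - p)) / (1 - p) = (a ^ (1 - p) - 1) / (p - 1) by
      rw [div_eq_div_iff (by linarith) (by linarith)]; ring]
  gcongr
  linarith

theorem setIntegral_setIntegral_le_of_le_rpow {f : ℝ → ℝ → ℝ} {a c p q : ℝ} (ha : 0 < a)
    (ha1 : a ≤ 1) (hp : 1 < p) (hq : 1 < q) (hc : 0 ≤ c)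
    (hf0 : ∀ s ∈ Icc a 1, ∀ t ∈ Icc a 1, 0 ≤ f s t)
    (hf : ∀ s ∈ Icc a 1, ∀ t ∈ Icc a 1,
      f s t ≤ c * (s ^ (-p) * t ^ (-q) + s ^ (-q) * t ^ (-p))) :
    ∫ s in Icc a 1, ∫ t in Icc a 1, f s t ≤ c * (2 / ((p - 1) * (q - 1))) * a ^ (2 - (p + q)) := by
  set T : ℝ → ℝ := fun r : ℝ => ∫ t in Icc a 1, t ^ (-r)
  have hT0 : ∀ r : ℝ, 0 ≤ T r := fun r =>
    setIntegral_nonneg measurableSet_Icc fun t ht => Real.rpow_nonneg (ha.le.trans ht.1) _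
  have hint : ∀ r : ℝ, IntegrableOn (fun t : ℝ => t ^ (-r)) (Icc a 1) := fun _ =>
    integrableOn_Icc_rpow ha
  have hinner : ∀ s ∈ Icc a 1, ∫ t in Icc a 1, f s t ≤ c * (s ^ (-p) * T q + s ^ (-q) * T p) :=
    fun s hs => calc
      ∫ t in Icc a 1, f s t
          ≤ ∫ t in Icc a 1, c * (s ^ (-p) * t ^ (-q) + s ^ (-q) * t ^ (-p)) :=
        integral_mono_of_nonneg (ae_restrict_of_forall_mem measurableSet_Icc (hf0 s hs))
          ((((hint q).const_mul _).add ((hint p).const_mul _)).const_mul _)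
          (ae_restrict_of_forall_mem measurableSet_Icc (hf s hs))
      _ = c * (s ^ (-p) * T q + s ^ (-q) * T p) := by
        rw [integral_const_mul, integral_add ((hint q).const_mul _) ((hint p).const_mul _),
          integral_const_mul, integral_const_mul]
  have hTp := setIntegral_Icc_rpow_neg_le ha ha1 hp
  have hTq := setIntegral_Icc_rpow_neg_le ha ha1 hq
  calc ∫ s in Icc a 1, ∫ t in Icc a 1, f s t
      ≤ ∫ s in Icc a 1, c * (s ^ (-p) * T q + s ^ (-q) * T p) :=
        integral_mono_of_nonneg
          (ae_restrict_of_forall_mem measurableSet_Icc fun s hs =>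
            setIntegral_nonneg measurableSet_Icc (hf0 s hs))
          ((((hint p).mul_const _).add ((hint q).mul_const _)).const_mul _)
          (ae_restrict_of_forall_mem measurableSet_Icc hinner)
    _ = c * (2 * (T p * T q)) := by
        rw [integral_const_mul, integral_add ((hint p).mul_const _) ((hint q).mul_const _),
          integral_mul_const, integral_mul_const]
        ring
    _ ≤ c * (2 * (a ^ (1 - p) / (p - 1) * (a ^ (1 - q) / (q - 1)))) := by
        gcongr
        exact hT0 q
    _ = c * (2 / ((p - 1) * (q - 1))) * a ^ (2 - (p + q)) := by
        rw [show 2 - (p + q) = (1 - p) + (1 - q) by ring, Real.rpow_add ha]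
        field_simp

theorem rpow_neg_mul_rpow_neg_le {m M α β p : ℝ} (hm : 0 < m) (hmM : m ≤ M) (hαp : α ≤ p) :
    m ^ (-α) * M ^ (-β) ≤ m ^ (-p) * M ^ (-(α + β - p)) := by
  have hM : 0 < M := hm.trans_le hmM
  have hratio : m ^ (p - α) * M ^ (-(p - α)) ≤ 1 := by
    rw [Real.rpow_neg hM.le, ← div_eq_mul_inv]
    exact div_le_one_of_le₀ (Real.rpow_le_rpow hm.le hmM (by linarith)) (by positivity)
  calc m ^ (-α) * M ^ (-β)
      = m ^ (-p) * M ^ (-(α + β - p)) * (m ^ (p - α) * M ^ (-(p - α))) := by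
        rw [mul_mul_mul_comm, ← Real.rpow_add hm, ← Real.rpow_add hM]
        ring_nf
    _ ≤ m ^ (-p) * M ^ (-(α + β - p)) := mul_le_of_le_one_right (by positivity) hratio

theorem min_rpow_neg_mul_max_rpow_neg_le {s t α β p : ℝ} (hs : 0 < s) (ht : 0 < t)
    (hαp : α ≤ p) :
    (min s t) ^ (-α) * (max s t) ^ (-β)
      ≤ s ^ (-p) * t ^ (-(α + β - p)) + s ^ (-(α + β - p)) * t ^ (-p) := by
  rcases le_total s t with hst | hts
  · rw [min_eq_left hst, max_eq_right hst]
    exact (rpow_neg_mul_rpow_neg_le hs hst hαp).trans (le_add_of_nonneg_right (by positivity))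
  · rw [min_eq_right hts, max_eq_left hts, add_comm, mul_comm (s ^ _)]
    exact (rpow_neg_mul_rpow_neg_le ht hts hαp).trans (le_add_of_nonneg_right (by positivity))

/-- `I_a(n)` with `α = γδ`, `β = γ'δ` and `ε = n^(-δ)`. -/
noncomputable def edgeIntegral (α β a ε : ℝ) : ℝ :=
  ∫ s in Icc a 1, ∫ t in Icc a 1, min 1 ((min s t) ^ (-α) * (max s t) ^ (-β) * ε)

theorem min_one_kernel_nonneg {α β ε s t : ℝ} (hs : 0 < s) (ht : 0 < t) (hε : 0 ≤ ε) :
    0 ≤ min 1 ((min s t) ^ (-α) * (max s t) ^ (-β) * ε) :=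
  le_min zero_le_one (by positivity)

theorem edgeIntegral_le {α β : ℝ} (hβ : 1 < β) (hαβ : 2 < α + β) :
    ∃ C, ∀ a ε : ℝ, 0 < a → a ≤ 1 → 0 ≤ ε →
      edgeIntegral α β a ε ≤ C * (ε * a ^ (2 - (α + β))) := by
  set p := max α ((α + β) / 2)
  have hp : 1 < p := by linarith [le_max_right α ((α + β) / 2)]
  have hq : 1 < α + β - p := by
    have : p < α + β - 1 := max_lt (by linarith) (by linarith)
    linarith
  refine ⟨2 / ((p - 1) * (α + β - p - 1)), fun a ε ha ha1 hε => ?_⟩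
  have hdom : ∀ s ∈ Icc a 1, ∀ t ∈ Icc a 1,
      min 1 ((min s t) ^ (-α) * (max s t) ^ (-β) * ε)
        ≤ ε * (s ^ (-p) * t ^ (-(α + β - p)) + s ^ (-(α + β - p)) * t ^ (-p)) :=
    fun s hs t ht => calc
      _ ≤ (min s t) ^ (-α) * (max s t) ^ (-β) * ε := min_le_right _ _
      _ ≤ _ := by
        rw [mul_comm]
        exact mul_le_mul_of_nonneg_left (min_rpow_neg_mul_max_rpow_neg_le (ha.trans_le hs.1)
          (ha.trans_le ht.1) (le_max_left _ _)) hε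
  refine (setIntegral_setIntegral_le_of_le_rpow ha ha1 hp hq hε (fun s hs t ht =>
    min_one_kernel_nonneg (ha.trans_le hs.1) (ha.trans_le ht.1) hε) hdom).trans_eq ?_
  ring_nf

theorem le_edgeIntegral {α β a ε : ℝ} (hα : 0 ≤ α) (hβ : 0 ≤ β) (ha : 0 < a)
    (h2a : 2 * a ≤ 1) (hε : 0 ≤ ε) (hsmall : a ^ (-(α + β)) * ε ≤ 1) :
    2 ^ (-(α + β)) * (ε * a ^ (2 - (α + β))) ≤ edgeIntegral α β a ε := by
  have h2a0 : 0 < 2 * a := by positivity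
  have hcorner : ∀ s ∈ Icc a (2 * a), ∀ t ∈ Icc a (2 * a),
      (2 * a) ^ (-(α + β)) * ε ≤ min 1 ((min s t) ^ (-α) * (max s t) ^ (-β) * ε) := by
    intro s hs t ht
    have hmin : 0 < min s t := lt_min (ha.trans_le hs.1) (ha.trans_le ht.1)
    refine le_min ((mul_le_mul_of_nonneg_right (Real.rpow_le_rpow_of_nonpos ha (by linarith)
      (by linarith)) hε).trans hsmall) (mul_le_mul_of_nonneg_right ?_ hε)
    rw [neg_add, Real.rpow_add h2a0]
    exact mul_le_mul (Real.rpow_le_rpow_of_nonpos hmin (min_le_left _ _ |>.trans hs.2)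
        (by linarith))
      (Real.rpow_le_rpow_of_nonpos (hmin.trans_le (min_le_max)) (max_le hs.2 ht.2)
        (by linarith)) (by positivity) (by positivity)
  have hlower := measureReal_sq_mul_le_setIntegral_setIntegral (μ := volume) (C := 1)
    (f := fun s t => min 1 ((min s t) ^ (-α) * (max s t) ^ (-β) * ε))
    measurableSet_Icc measure_Icc_lt_top measurableSet_Icc
    (Icc_subset_Icc le_rfl h2a) (by fun_prop)
    (fun s hs t ht => min_one_kernel_nonneg (ha.trans_le hs.1) (ha.trans_le ht.1) hε)
    (fun _ _ _ _ => min_le_left _ _) hcorner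
  rw [Real.volume_real_Icc_of_le (show a ≤ 2 * a by linarith), show 2 * a - a = a by ring]
    at hlower
  refine le_of_eq_of_le ?_ hlower
  rw [Real.mul_rpow zero_le_two ha.le, show 2 - (α + β) = 2 + -(α + β) by ring,
    Real.rpow_add ha, Real.rpow_two]
  ring

theorem tendsto_neg_log_div_log_of_le_of_le {f : ℝ → ℝ} {c C L : ℝ} (hc : 0 < c)
    (hf : ∀ᶠ n in atTop, c * n ^ (-L) ≤ f n ∧ f n ≤ C * n ^ (-L)) :
    Tendsto (fun n => -Real.log (f n) / Real.log n) atTop (𝓝 L) := by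
  have hlim : ∀ b : ℝ, Tendsto (fun n => L - b / Real.log n) atTop (𝓝 L) := fun b => by
    have h0 : Tendsto (fun n => b / Real.log n) atTop (𝓝 0) :=
      tendsto_const_nhds.div_atTop Real.tendsto_log_atTop
    simpa using tendsto_const_nhds.sub h0
  refine tendsto_of_tendsto_of_tendsto_of_le_of_le' (hlim (Real.log C)) (hlim (Real.log c)) ?_ ?_
  all_goals
    filter_upwards [hf, eventually_gt_atTop 1] with n ⟨hlo, hhi⟩ hn
    have hn0 : 0 < n := one_pos.trans hn
    have hlog : 0 < Real.log n := Real.log_pos hn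
    have hpow : 0 < n ^ (-L) := by positivity
    have hfn : 0 < f n := (mul_pos hc hpow).trans_le hlo
    rw [sub_div' hlog.ne', div_le_div_iff_of_pos_right hlog]
  · have hC : 0 < C := pos_of_mul_pos_left (hfn.trans_le hhi) hpow.le
    have := Real.log_le_log hfn hhi
    rw [Real.log_mul hC.ne' hpow.ne', Real.log_rpow hn0] at this
    linarith
  · have := Real.log_le_log (mul_pos hc hpow) hlo
    rw [Real.log_mul hc.ne' hpow.ne', Real.log_rpow hn0] at this
    linarith

/-- The quantity `ψ⁻(μ)` for the interpolation kernel with long-range profile in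
the regime `γ' > 1/δ`, `δ(γ+γ') > 2`: with mark cutoff `n^(-1-μ)`, one has
`-log I_μ(n)/log n → δ - (1+μ)(δ(γ+γ') - 2)` for
`I_μ(n) = ∫∫_{[n^(-1-μ),1]²} min(1, (s∧t)^(-γδ)(s∨t)^(-γ'δ) n^(-δ)) ds dt`. -/
theorem psi_minus_large_gamma' (δ γ γ' μ : ℝ) (hδ : 0 < δ)
    (hγ0 : 0 ≤ γ) (hγ' : 1 / δ < γ') (hμ : 0 < μ)
    (hsum_lower : 2 < δ * (γ + γ')) (hsum : (1 + μ) * (γ + γ') < 1) :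
    Tendsto (fun n : ℝ =>
      -Real.log (∫ s in Set.Icc (n ^ (-1 - μ)) 1, ∫ t in Set.Icc (n ^ (-1 - μ)) 1,
          min 1 ((min s t) ^ (-(γ * δ)) * (max s t) ^ (-(γ' * δ)) * n ^ (-δ)))
        / Real.log n) atTop (nhds (δ - (1 + μ) * (δ * (γ + γ') - 2))) := by
  have hβ : 1 < γ' * δ := by rw [div_lt_iff₀ hδ] at hγ'; linarith
  have hσ : γ * δ + γ' * δ = δ * (γ + γ') := by ring
  obtain ⟨C, hC⟩ := edgeIntegral_le (α := γ * δ) hβ (by linarith)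
  have hcut : Tendsto (fun n : ℝ => n ^ (-1 - μ)) atTop (𝓝 0) := by
    rw [show -1 - μ = -(1 + μ) by ring]
    exact tendsto_rpow_neg_atTop (by linarith)
  refine tendsto_neg_log_div_log_of_le_of_le (c := 2 ^ (-(γ * δ + γ' * δ))) (C := C)
    (f := fun n => edgeIntegral (γ * δ) (γ' * δ) (n ^ (-1 - μ)) (n ^ (-δ))) (by positivity) ?_
  filter_upwards [eventually_ge_atTop 1,
    hcut.eventually_le_const (show (0 : ℝ) < 1 / 2 by norm_num)] with n hn ha
  have hn0 : 0 < n := one_pos.trans_le hn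
  have hscale : n ^ (-δ) * (n ^ (-1 - μ)) ^ (2 - (γ * δ + γ' * δ))
      = n ^ (-(δ - (1 + μ) * (δ * (γ + γ') - 2))) := by
    rw [← Real.rpow_mul hn0.le, ← Real.rpow_add hn0, hσ]; ring_nf
  have hsmall : (n ^ (-1 - μ)) ^ (-(γ * δ + γ' * δ)) * n ^ (-δ) ≤ 1 := by
    rw [← Real.rpow_mul hn0.le, ← Real.rpow_add hn0]
    exact Real.rpow_le_one_of_one_le_of_nonpos hn (by nlinarith)
  rw [← hscale]
  exact ⟨le_edgeIntegral (by positivity) (by positivity) (by positivity) (by linarith)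
    (by positivity) hsmall, hC _ _ (by positivity) (by linarith) (by positivity)⟩
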